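/- In the setup (G centerless, f, h : G → Aut(G) with h(σ) = conj(g(σ))∘f(σ), g a bijection satisfying g(στ) = g(σ)·f(σ)(g(τ)), and N = {ρ(g(σ))∘f(σ) : σ ∈ G} a normal subgroup of Hol(G)), one has f(G) ∩ Inn(G) = f(ker(f)·ker(h)) and h(G) ∩ Inn(G) = h(ker(f)·ker(h)). -/

import Mathlib

/-- The left regular representation `λ : G →* Perm G`, `λ(σ)(x) = σ·x`. -/
def lambda (G : Type*) [Group G] : G →* Equiv.Perm G where
  toFun σ := Equiv.mulLeft σ
  map_one' := by ext x; simp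
  map_mul' σ τ := by ext x; simp [mul_assoc]

/-- The right regular representation `ρ : G →* Perm G`, `ρ(σ)(x) = x·σ⁻¹`. -/
def rho (G : Type*) [Group G] : G →* Equiv.Perm G where
  toFun σ := Equiv.mulRight σ⁻¹
  map_one' := by ext x; simp
  map_mul' σ τ := by ext x; simp [mul_assoc]

/-- The holomorph `Hol(G)`: the normalizer of `λ(G)` in `Perm G`. -/
def Hol (G : Type*) [Group G] : Subgroup (Equiv.Perm G) :=
  Subgroup.normalizer (((lambda G).range : Subgroup (Equiv.Perm G)) : Set (Equiv.Perm G))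

/-!
Write `η(x) = h(g⁻¹ x)`. Since `ρ(a) = λ(a⁻¹) ∘ conj(a)`, the elements of `N` are exactly the
maps `λ(x⁻¹) ∘ η(x)`. As `λ(G)` and `Aut(G)` lie in `Hol(G)`, normality of `N` shows that
`f(σ)(y) y⁻¹ ∈ ker η` and that `η` is `Aut(G)`-equivariant; with the cocycle identity for `g`
this makes `η` a homomorphism.

If `f(σ) = conj(t)`, then `η(t)` commutes with `η(G)` and with `f(G)`, hence with every
`conj(u) = η(u) f(g⁻¹ u)⁻¹`; as `G` is centerless, `η(t) = 1`. So `k = g⁻¹(t) ∈ ker h` and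
`f(k) = f(σ)⁻¹`, whence `σ ∈ ker f · ker h`. Since `h(σ)` and `f(σ)` differ by an inner
automorphism, both equalities are about the same preimage of `Inn(G)`.
-/

section Holomorph

variable {G : Type*} [Group G]

@[simp]
lemma lambda_apply (a x : G) : lambda G a x = a * x := rfl

@[simp]
lemma rho_apply (a x : G) : rho G a x = x * a⁻¹ := rfl

@[simp]
lemma toPerm_apply (φ : MulAut G) (x : G) : MulAut.toPerm G φ x = φ x := rfl

lemma rho_eq_lambda_inv_mul_conj (a : G) :
    rho G a = lambda G a⁻¹ * MulAut.toPerm G (MulAut.conj a) := by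
  ext x
  simp only [rho_apply, Equiv.Perm.mul_apply, toPerm_apply, MulAut.conj_apply, lambda_apply]
  group

lemma toPerm_mul_lambda (φ : MulAut G) (a : G) :
    MulAut.toPerm G φ * lambda G a = lambda G (φ a) * MulAut.toPerm G φ := by
  ext x; simp

lemma rho_mul_toPerm_conj_lambda (b : G) (φ : MulAut G) (a : G) :
    rho G b * MulAut.toPerm G φ * lambda G a * (rho G b * MulAut.toPerm G φ)⁻¹ =
      lambda G (φ a) := by
  rw [mul_inv_eq_iff_eq_mul]; ext x; simp [mul_assoc]

lemma lambda_mul_toPerm_inj {a b : G} {φ ψ : MulAut G} :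
    lambda G a * MulAut.toPerm G φ = lambda G b * MulAut.toPerm G ψ ↔ a = b ∧ φ = ψ := by
  refine ⟨fun hab => ?_, fun ⟨rfl, rfl⟩ => rfl⟩
  have hab' : a = b := by simpa using congr($hab 1)
  subst hab'
  refine ⟨rfl, MulEquiv.ext fun x => ?_⟩
  simpa using congr($hab x)

lemma mem_Hol_of_conj_lambda (x : Equiv.Perm G) (φ : MulAut G)
    (hφ : ∀ a, x * lambda G a * x⁻¹ = lambda G (φ a)) : x ∈ Hol G := by
  refine Subgroup.mem_normalizer_iff.mpr fun y => ⟨?_, ?_⟩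
  · rintro ⟨a, rfl⟩
    exact ⟨φ a, (hφ a).symm⟩
  · rintro ⟨b, hb⟩
    refine ⟨φ.symm b, mul_left_cancel (a := x) (mul_right_cancel (b := x⁻¹) ?_)⟩
    rw [hφ, MulEquiv.apply_symm_apply, hb]

lemma lambda_mem_Hol (a : G) : lambda G a ∈ Hol G :=
  Subgroup.le_normalizer ⟨a, rfl⟩

lemma toPerm_mem_Hol (φ : MulAut G) : MulAut.toPerm G φ ∈ Hol G :=
  mem_Hol_of_conj_lambda _ φ fun a => by rw [toPerm_mul_lambda, mul_inv_cancel_right]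

lemma MulAut.conj_map (φ : MulAut G) (u : G) :
    MulAut.conj (φ u) = φ * MulAut.conj u * φ⁻¹ := by
  ext x; simp

lemma MulAut.conj_injective_of_center_eq_bot (hZ : Subgroup.center G = ⊥) :
    Function.Injective (MulAut.conj : G →* MulAut G) := by
  refine (injective_iff_map_eq_one _).mpr fun a ha => ?_
  have hcenter : a ∈ Subgroup.center G := Subgroup.mem_center_iff.mpr fun x => by
    have hx : a * x * a⁻¹ = x := by simpa using congr($ha x)
    exact (mul_inv_eq_iff_eq_mul.mp hx).symm
  simpa [hZ] using hcenter

lemma MulAut.eq_one_of_forall_commute_conj (hZ : Subgroup.center G = ⊥) {φ : MulAut G}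
    (hφ : ∀ u, Commute φ (MulAut.conj u)) : φ = 1 := by
  ext u
  refine MulAut.conj_injective_of_center_eq_bot hZ ?_
  rw [MulAut.conj_map, (hφ u).eq, mul_inv_cancel_right, MulAut.one_apply]

end Holomorph

section BijectiveCrossedHomomorphism

variable {G : Type*} [Group G] {f h : G →* MulAut G} {g : Equiv.Perm G}
  {N : Subgroup (Equiv.Perm G)}

def eta (h : G →* MulAut G) (g : Equiv.Perm G) (x : G) : MulAut G := h (g.symm x)

@[simp]
lemma eta_apply (σ : G) : eta h g (g σ) = h σ := by
  simp [eta]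

lemma map_eq_conj_inv_of_eq_one (hh : ∀ σ : G, h σ = MulAut.conj (g σ) * f σ) {k : G}
    (hk : h k = 1) : f k = MulAut.conj (g k)⁻¹ := by
  rw [map_inv]
  exact eq_inv_of_mul_eq_one_right (by rw [← hh, hk])

lemma comap_range_conj_eq_of_eq_conj_mul (c : G → G)
    (hh : ∀ σ : G, h σ = MulAut.conj (c σ) * f σ) :
    (MulAut.conj : G →* MulAut G).range.comap h = (MulAut.conj : G →* MulAut G).range.comap f := by
  ext σ
  simp only [Subgroup.mem_comap, hh σ]
  exact Subgroup.mul_mem_cancel_left _ ⟨c σ, rfl⟩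

lemma lambda_inv_mul_toPerm_mem_iff (hh : ∀ σ : G, h σ = MulAut.conj (g σ) * f σ)
    (hN : (N : Set (Equiv.Perm G))
      = {q | ∃ σ : G, q = rho G (g σ) * MulAut.toPerm G (f σ)})
    (x : G) (ψ : MulAut G) :
    lambda G x⁻¹ * MulAut.toPerm G ψ ∈ N ↔ ψ = eta h g x := by
  have hρ (σ : G) : rho G (g σ) * MulAut.toPerm G (f σ)
      = lambda G (g σ)⁻¹ * MulAut.toPerm G (h σ) := by
    rw [hh, map_mul, rho_eq_lambda_inv_mul_conj, mul_assoc]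
  rw [← SetLike.mem_coe, hN]
  simp only [Set.mem_ofPred_eq, hρ, lambda_mul_toPerm_inj, inv_inj]
  constructor
  · rintro ⟨σ, rfl, rfl⟩
    exact (eta_apply σ).symm
  · rintro rfl
    exact ⟨g.symm x, by simp, rfl⟩

lemma lambda_mem_iff_eta_eq_one
    (hmem : ∀ (x : G) (ψ : MulAut G), lambda G x⁻¹ * MulAut.toPerm G ψ ∈ N ↔ ψ = eta h g x)
    (x : G) : lambda G x ∈ N ↔ eta h g x = 1 := by
  rw [← inv_mem_iff, ← map_inv, ← mul_one (lambda G x⁻¹), ← map_one (MulAut.toPerm G), hmem,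
    eq_comm]

lemma eta_map
    (hmem : ∀ (x : G) (ψ : MulAut G), lambda G x⁻¹ * MulAut.toPerm G ψ ∈ N ↔ ψ = eta h g x)
    (hNnorm : ∀ x ∈ Hol G, ∀ n ∈ N, x * n * x⁻¹ ∈ N) (φ : MulAut G) (x : G) :
    eta h g (φ x) = φ * eta h g x * φ⁻¹ := by
  have hconj := hNnorm _ (toPerm_mem_Hol φ) _ ((hmem x _).mpr rfl)
  have hcalc : MulAut.toPerm G φ * (lambda G x⁻¹ * MulAut.toPerm G (eta h g x))
      * (MulAut.toPerm G φ)⁻¹ = lambda G (φ x)⁻¹ * MulAut.toPerm G (φ * eta h g x * φ⁻¹) := by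
    rw [← mul_assoc, toPerm_mul_lambda]
    simp only [map_inv, map_mul]
    group
  rw [hcalc, hmem] at hconj
  exact hconj.symm

lemma eta_apply_mul_inv_eq_one (hh : ∀ σ : G, h σ = MulAut.conj (g σ) * f σ)
    (hmem : ∀ (x : G) (ψ : MulAut G), lambda G x⁻¹ * MulAut.toPerm G ψ ∈ N ↔ ψ = eta h g x)
    (hNnorm : ∀ x ∈ Hol G, ∀ n ∈ N, x * n * x⁻¹ ∈ N) (σ y : G) :
    eta h g (f σ y * y⁻¹) = 1 := by
  rw [← lambda_mem_iff_eta_eq_one hmem]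
  have hn : rho G (g σ) * MulAut.toPerm G (f σ) ∈ N := by
    rw [rho_eq_lambda_inv_mul_conj, mul_assoc, ← map_mul, ← hh, hmem, eta_apply]
  have hcomm : lambda G (f σ y * y⁻¹) = rho G (g σ) * MulAut.toPerm G (f σ)
      * (lambda G y * (rho G (g σ) * MulAut.toPerm G (f σ))⁻¹ * (lambda G y)⁻¹) := by
    rw [map_mul, map_inv, ← rho_mul_toPerm_conj_lambda (g σ) (f σ) y]
    group
  rw [hcomm]
  exact mul_mem hn (hNnorm _ (lambda_mem_Hol y) _ (inv_mem hn))

lemma eta_mul_of_eta_eq_one (hrel : ∀ σ τ : G, g (σ * τ) = g σ * (f σ) (g τ))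
    (hh : ∀ σ : G, h σ = MulAut.conj (g σ) * f σ) {s : G} (hs : eta h g s = 1) (y : G) :
    eta h g (y * s) = eta h g y := by
  have hf := map_eq_conj_inv_of_eq_one hh (k := g.symm s) hs
  have hg : g (g.symm s * g.symm y) = y * s := by
    rw [hrel, hf, Equiv.apply_symm_apply, Equiv.apply_symm_apply, MulAut.conj_apply]
    group
  have hk : h (g.symm s) = 1 := hs
  rw [← hg, eta_apply, map_mul, hk, one_mul, eta]

lemma eta_mul (hrel : ∀ σ τ : G, g (σ * τ) = g σ * (f σ) (g τ))
    (hh : ∀ σ : G, h σ = MulAut.conj (g σ) * f σ)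
    (hmem : ∀ (x : G) (ψ : MulAut G), lambda G x⁻¹ * MulAut.toPerm G ψ ∈ N ↔ ψ = eta h g x)
    (hNnorm : ∀ x ∈ Hol G, ∀ n ∈ N, x * n * x⁻¹ ∈ N) (x y : G) :
    eta h g (x * y) = eta h g x * eta h g y := by
  set σ := g.symm x
  have hs : eta h g (y⁻¹ * f σ y) = 1 := by
    have := eta_map hmem hNnorm (MulAut.conj y⁻¹) (f σ y * y⁻¹)
    rwa [eta_apply_mul_inv_eq_one hh hmem hNnorm, mul_one, mul_inv_cancel, MulAut.conj_apply,
      inv_inv, mul_assoc, inv_mul_cancel_right] at this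
  have hg : g (σ * g.symm y) = x * y * (y⁻¹ * f σ y) := by
    rw [hrel, Equiv.apply_symm_apply, Equiv.apply_symm_apply]
    group
  calc eta h g (x * y) = eta h g (g (σ * g.symm y)) := by
        rw [hg, eta_mul_of_eta_eq_one hrel hh hs]
    _ = eta h g x * eta h g y := by
        rw [eta_apply, map_mul]
        rfl

lemma eta_eq_one_of_map_eq_conj (hZ : Subgroup.center G = ⊥)
    (hrel : ∀ σ τ : G, g (σ * τ) = g σ * (f σ) (g τ))
    (hh : ∀ σ : G, h σ = MulAut.conj (g σ) * f σ)
    (hmem : ∀ (x : G) (ψ : MulAut G), lambda G x⁻¹ * MulAut.toPerm G ψ ∈ N ↔ ψ = eta h g x)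
    (hNnorm : ∀ x ∈ Hol G, ∀ n ∈ N, x * n * x⁻¹ ∈ N) {σ t : G} (hσ : f σ = MulAut.conj t) :
    eta h g t = 1 := by
  let η : G →* MulAut G := MonoidHom.mk' (eta h g) (eta_mul hrel hh hmem hNnorm)
  have hη_ker (τ x : G) : η (f τ x * x⁻¹) = 1 := eta_apply_mul_inv_eq_one hh hmem hNnorm τ x
  have commute_eta (u : G) : Commute (η t) (η u) := by
    rw [← commutatorElement_eq_one_iff_commute, ← map_commutatorElement, commutatorElement_def]
    simpa only [hσ, MulAut.conj_apply] using hη_ker σ u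
  have commute_f (τ : G) : Commute (η t) (f τ) := by
    have hfix : η (f τ t) = η t := by
      rw [← mul_inv_eq_one, ← map_inv, ← map_mul]
      exact hη_ker τ t
    have hequiv : η (f τ t) = f τ * η t * (f τ)⁻¹ := eta_map hmem hNnorm (f τ) t
    rw [hfix, eq_mul_inv_iff_mul_eq] at hequiv
    exact hequiv
  have commute_conj (u : G) : Commute (η t) (MulAut.conj u) := by
    have hconj : MulAut.conj u = η u * (f (g.symm u))⁻¹ := by
      rw [MonoidHom.mk'_apply, eta, hh, Equiv.apply_symm_apply, mul_inv_cancel_right]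
    rw [hconj]
    exact (commute_eta u).mul_right (commute_f _).inv_right
  exact MulAut.eq_one_of_forall_commute_conj hZ commute_conj

lemma comap_range_conj_eq_ker_sup_ker (hZ : Subgroup.center G = ⊥)
    (hrel : ∀ σ τ : G, g (σ * τ) = g σ * (f σ) (g τ))
    (hh : ∀ σ : G, h σ = MulAut.conj (g σ) * f σ)
    (hmem : ∀ (x : G) (ψ : MulAut G), lambda G x⁻¹ * MulAut.toPerm G ψ ∈ N ↔ ψ = eta h g x)
    (hNnorm : ∀ x ∈ Hol G, ∀ n ∈ N, x * n * x⁻¹ ∈ N) :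
    (MulAut.conj : G →* MulAut G).range.comap f = f.ker ⊔ h.ker := by
  refine le_antisymm ?_ (sup_le (f.ker_le_comap _) fun k hk => ?_)
  · rintro σ ⟨t, ht⟩
    set k := g.symm t
    have hk : h k = 1 := eta_eq_one_of_map_eq_conj hZ hrel hh hmem hNnorm ht.symm
    have hfk : f k = MulAut.conj t⁻¹ := by
      rw [map_eq_conj_inv_of_eq_one hh hk, Equiv.apply_symm_apply]
    have hσk : σ * k ∈ f.ker := by
      rw [MonoidHom.mem_ker, map_mul, ← ht, hfk, ← map_mul, mul_inv_cancel, map_one]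
    have hk_inv : k⁻¹ ∈ h.ker := inv_mem (h.mem_ker.mpr hk)
    simpa using mul_mem (Subgroup.mem_sup_left hσk) (Subgroup.mem_sup_right hk_inv)
  · exact ⟨(g k)⁻¹, (map_eq_conj_inv_of_eq_one hh hk).symm⟩

end BijectiveCrossedHomomorphism

theorem range_inf_inn_eq_map_ker_sup_ker_general
    (G : Type*) [Group G] (hZ : Subgroup.center G = ⊥)
    (f h : G →* MulAut G) (g : Equiv.Perm G)
    (hrel : ∀ σ τ : G, g (σ * τ) = g σ * (f σ) (g τ))
    (hh : ∀ σ : G, h σ = MulAut.conj (g σ) * f σ)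
    (N : Subgroup (Equiv.Perm G))
    (hN : (N : Set (Equiv.Perm G))
      = {q | ∃ σ : G, q = rho G (g σ) * MulAut.toPerm G (f σ)})
    (hNnorm : ∀ x ∈ Hol G, ∀ n ∈ N, x * n * x⁻¹ ∈ N)
    :
    f.range ⊓ (MulAut.conj : G →* MulAut G).range = Subgroup.map f (f.ker ⊔ h.ker) ∧
      h.range ⊓ (MulAut.conj : G →* MulAut G).range = Subgroup.map h (f.ker ⊔ h.ker) := by
  have hf := comap_range_conj_eq_ker_sup_ker hZ hrel hh
    (lambda_inv_mul_toPerm_mem_iff hh hN) hNnorm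
  have hh' := comap_range_conj_eq_of_eq_conj_mul g hh
  simp only [← Subgroup.map_comap_eq, hh', hf, and_self]

/-- In the setup, `f(G) ∩ Inn(G) = f(ker(f)·ker(h))` and
`h(G) ∩ Inn(G) = h(ker(f)·ker(h))` (here `ker(f)·ker(h) = ker f ⊔ ker h`
since both kernels are normal). -/
theorem range_inf_inn_eq_map_ker_sup_ker
    (G : Type*) [Group G] (hZ : Subgroup.center G = ⊥)
    (f h : G →* MulAut G) (g : Equiv.Perm G) (hg1 : g 1 = 1)
    (hrel : ∀ σ τ : G, g (σ * τ) = g σ * (f σ) (g τ))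
    (hh : ∀ σ : G, h σ = MulAut.conj (g σ) * f σ)
    (N : Subgroup (Equiv.Perm G))
    (hN : (N : Set (Equiv.Perm G))
      = {q | ∃ σ : G, q = rho G (g σ) * MulAut.toPerm G (f σ)})
    (hNle : N ≤ Hol G)
    (hNnorm : ∀ x ∈ Hol G, ∀ n ∈ N, x * n * x⁻¹ ∈ N)
    :
    f.range ⊓ (MulAut.conj : G →* MulAut G).range = Subgroup.map f (f.ker ⊔ h.ker) ∧
      h.range ⊓ (MulAut.conj : G →* MulAut G).range = Subgroup.map h (f.ker ⊔ h.ker) :=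
  range_inf_inn_eq_map_ker_sup_ker_general G hZ f h g hrel hh N hN hNnorm
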